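/- Let G, K, KL, KP ∈ ℚ[[s,u,v,w]] and assume: (i) K = 3G_v − v·KL − ((1/2)v² + w)·KP − (G_s·(L G) + G_u·(P G)) (equation (K) of Proposition 3.7), and (ii) G_{vs} = G_{us} − G_u + (1/2)(G_{ss}·(L G_s) + G_{us}·(P G_s)) (equation (10) of the paper). Then K_s − ( 3(G_{us} − G_u + (1/2)G_{ss}²) − 2G_s·G_{ss} ) lies in the ideal of ℚ[[s,u,v,w]] generated by v and w; equivalently, after setting v = w = 0, K_s = 3(G_{us} − G_u + (1/2)G_{ss}²) − ∂/∂s (G_s²). (This is the paper's remark that its cusp equation specialises, modulo (v,w), to Pandharipande's recursion for cuspidal plane rational curves through points.) -/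

import Mathlib

/-- Formal partial derivative of a multivariate power series with respect to the `i`-th
variable: the coefficient at a monomial `m` is `(m i + 1)` times the coefficient at
`m + eᵢ`. -/
noncomputable def pd {n : ℕ} (i : Fin n) (F : MvPowerSeries (Fin n) ℚ) :
    MvPowerSeries (Fin n) ℚ :=
  fun m => ((m i : ℚ) + 1) * MvPowerSeries.coeff (m + Finsupp.single i 1) F

/-- The operator `L = ∂/∂s + 2v ∂/∂u` on `ℚ[[s,u,v,w]]` (variables `s,u,v,w = 0,1,2,3`). -/
noncomputable def Lop (F : MvPowerSeries (Fin 4) ℚ) : MvPowerSeries (Fin 4) ℚ :=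
  pd 0 F + 2 * MvPowerSeries.X 2 * pd 1 F

/-- The operator `P = 2v ∂/∂s + (2v²+2w) ∂/∂u` on `ℚ[[s,u,v,w]]`. -/
noncomputable def Pop (F : MvPowerSeries (Fin 4) ℚ) : MvPowerSeries (Fin 4) ℚ :=
  2 * MvPowerSeries.X 2 * pd 0 F +
    (2 * MvPowerSeries.X 2 ^ 2 + 2 * MvPowerSeries.X 3) * pd 1 F

/-!
Modulo the ideal `(v, w)` the operator `L` reduces to `∂/∂s` and `P` vanishes, so (K) becomes
`K ≡ 3 G_v - G_s²` and (10) becomes `G_{vs} ≡ G_{us} - G_u + ½ G_{ss}²`. Since `∂/∂s` kills `v`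
and `w`, it preserves the ideal `(v, w)`; differentiating the first congruence in `s` and
substituting the second one gives the claim.
-/

open MvPowerSeries

theorem pd_eq_pderiv {n : ℕ} (i : Fin n) (F : MvPowerSeries (Fin n) ℚ) :
    pd i F = pderiv ℚ i F := by
  ext m
  rw [coeff_pderiv, mul_comm]
  rfl

theorem MvPowerSeries.pderiv_comm {σ R : Type*} [CommSemiring R] (i j : σ)
    (f : MvPowerSeries σ R) : pderiv R i (pderiv R j f) = pderiv R j (pderiv R i f) := by
  ext n
  simp only [coeff_pderiv, Finsupp.add_apply, add_right_comm n (Finsupp.single i 1)]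
  rcases eq_or_ne i j with rfl | hij
  · rfl
  · simp [hij, hij.symm]
    ring

namespace Derivation

variable {R A : Type*}

theorem map_mem_span [CommSemiring R] [CommSemiring A] [Algebra R A]
    (D : Derivation R A A) {s : Set A} (hs : ∀ x ∈ s, D x ∈ Ideal.span s) {x : A}
    (hx : x ∈ Ideal.span s) : D x ∈ Ideal.span s := by
  induction hx using Submodule.span_induction with
  | mem x hx => exact hs x hx
  | zero => simp
  | add x y _ _ hx hy => simpa using add_mem hx hy
  | smul a x hx hDx =>
    rw [smul_eq_mul, D.leibniz, smul_eq_mul, smul_eq_mul]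
    exact add_mem (Ideal.mul_mem_left _ a hDx) (Ideal.mul_mem_right _ _ hx)

theorem mk_map_eq_mk_map_of_mk_eq [CommRing R] [CommRing A] [Algebra R A]
    (D : Derivation R A A) {s : Set A} (hs : ∀ x ∈ s, D x ∈ Ideal.span s) {x y : A}
    (h : Ideal.Quotient.mk (Ideal.span s) x = Ideal.Quotient.mk (Ideal.span s) y) :
    Ideal.Quotient.mk (Ideal.span s) (D x) = Ideal.Quotient.mk (Ideal.span s) (D y) := by
  rw [Ideal.Quotient.eq] at h ⊢
  simpa using D.map_mem_span hs h

end Derivation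

/-- Let `G, K, KL, KP ∈ ℚ[[s,u,v,w]]` and assume
(i) `K = 3G_v − v·KL − ((1/2)v² + w)·KP − (G_s·(L G) + G_u·(P G))` (equation (K) of
Proposition 3.7 of the paper), and
(ii) `G_{vs} = G_{us} − G_u + (1/2)(G_{ss}·(L G_s) + G_{us}·(P G_s))` (equation (10)).
Then `K_s − (3(G_{us} − G_u + (1/2)G_{ss}²) − ∂/∂s(G_s²))` lies in the ideal of
`ℚ[[s,u,v,w]]` generated by `v` and `w`; i.e. modulo `(v,w)` the cusp equation specialises to
Pandharipande's recursion for cuspidal plane rational curves through points. -/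
theorem cusp_potential_modulo_v_w
    (G K KL KP : MvPowerSeries (Fin 4) ℚ)
    (hK : K = 3 * pd 2 G - MvPowerSeries.X 2 * KL
        - ((MvPowerSeries.C (1 / 2) : MvPowerSeries (Fin 4) ℚ) * MvPowerSeries.X 2 ^ 2 +
            MvPowerSeries.X 3) * KP
        - (pd 0 G * Lop G + pd 1 G * Pop G))
    (hTRR : pd 2 (pd 0 G) = pd 1 (pd 0 G) - pd 1 G
        + (MvPowerSeries.C (1 / 2) : MvPowerSeries (Fin 4) ℚ) *
            (pd 0 (pd 0 G) * Lop (pd 0 G) + pd 1 (pd 0 G) * Pop (pd 0 G))) :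
    pd 0 K -
        (3 * (pd 1 (pd 0 G) - pd 1 G +
            (MvPowerSeries.C (1 / 2) : MvPowerSeries (Fin 4) ℚ) * (pd 0 (pd 0 G)) ^ 2) -
          pd 0 ((pd 0 G) ^ 2)) ∈
      Ideal.span {(MvPowerSeries.X 2 : MvPowerSeries (Fin 4) ℚ), MvPowerSeries.X 3} := by
  set π := Ideal.Quotient.mk (Ideal.span {(X 2 : MvPowerSeries (Fin 4) ℚ), X 3})
  have hv : π (X 2) = 0 := Ideal.Quotient.eq_zero_iff_mem.2 (Ideal.subset_span (by simp))
  have hw : π (X 3) = 0 := Ideal.Quotient.eq_zero_iff_mem.2 (Ideal.subset_span (by simp))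
  have hDs : ∀ {F F'}, π F = π F' → π (pderiv ℚ 0 F) = π (pderiv ℚ 0 F') :=
    (pderiv ℚ 0).mk_map_eq_mk_map_of_mk_eq <| by
      rintro _ (rfl | rfl) <;> simp [pderiv_X_of_ne]
  have hD3 : ∀ F : MvPowerSeries (Fin 4) ℚ, pderiv ℚ 0 (3 * F) = 3 * pderiv ℚ 0 F := fun F => by
    rw [Derivation.leibniz, ← map_ofNat C 3, pderiv_C, smul_zero, add_zero, smul_eq_mul]
  simp only [Lop, Pop, pd_eq_pderiv] at hK hTRR ⊢
  have hKmod : π K = π (3 * pderiv ℚ 2 G - pderiv ℚ 0 G ^ 2) := by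
    rw [hK]; simp [hv, hw]; ring
  have hTRRmod : π (pderiv ℚ 2 (pderiv ℚ 0 G)) =
      π (pderiv ℚ 1 (pderiv ℚ 0 G) - pderiv ℚ 1 G + C (1 / 2) * pderiv ℚ 0 (pderiv ℚ 0 G) ^ 2) := by
    rw [hTRR]; simp [hv, hw]; ring
  rw [← Ideal.Quotient.eq_zero_iff_mem, map_sub, hDs hKmod, map_sub (pderiv ℚ 0), hD3,
    pderiv_comm (0 : Fin 4) 2]
  simp only [map_sub, map_mul, hTRRmod]
  ring
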